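/- Let k be an algebraically closed field of characteristic χ > 0, let f = (f_1,...,f_m) ∈ k[t_1,...,t_n]^m induce a surjective map k^n → k^m, and let h : k^m → k be any function such that h ∘ f is a polynomial function. Then there exists ν ∈ ℕ₀ such that the function (y_1,...,y_m) ↦ h(y_1,...,y_m)^(χ^ν) is a polynomial function on k^m. -/

import Mathlib

/-!
By the Nullstellensatz, since `g` is constant on the fibres of `f`, a power of `g(x) - g(y)`
lies in the ideal generated by the `f_i(x) - f_i(y)`; raising to a power `q = χ^N` turns this
into `g^q(x) - g^q(y)` itself. Mapping to `L ⊗_K L`, where `L` and `K` are the fraction fields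
of `k[x]` and of `k[f] ≅ k[y]`, gives `g^q ⊗ 1 = 1 ⊗ g^q`, so `g^q ∈ K` by faithfully flat
descent: `g^q = P(f) / Q(f)` with `P, Q` coprime. Then `h^q · Q = P` on all of `k^m`, so `P`
vanishes wherever `Q` does; by the Nullstellensatz every prime factor of `Q` divides `P`, hence
`Q` is a constant and `h^q = P / Q` is a polynomial function.
-/

open MvPolynomial

/-- `p` vanishes at every point of `A`. -/
def VanishesOn {k : Type*} [CommSemiring k] {m : ℕ} (A : Set (Fin m → k))
    (p : MvPolynomial (Fin m) k) : Prop :=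
  ∀ a ∈ A, eval a p = 0

/-- The Zariski closure of `A ⊆ k^m` has dimension at most `d` (with `dim ∅ = -1`):
for every index set `S` with more than `d` elements, the vanishing ideal of `A`
contains a nonzero polynomial supported on the variables in `S`. -/
def ZClosureDimLE {k : Type*} [CommSemiring k] {m : ℕ} (A : Set (Fin m → k)) (d : ℤ) : Prop :=
  ∀ S : Finset (Fin m), d < (S.card : ℤ) →
    ∃ p : MvPolynomial (Fin m) k, p ≠ 0 ∧
      p ∈ MvPolynomial.supported k (↑S : Set (Fin m)) ∧ VanishesOn A p

/-- The range of the polynomial map `k^n → k^m` induced by `f`. -/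
def polyRange {k : Type*} [CommSemiring k] {m n : ℕ}
    (f : Fin m → MvPolynomial (Fin n) k) : Set (Fin m → k) :=
  Set.range fun a : Fin n → k => fun i => eval a (f i)

/-- `f` is almost surjective on `k`: the Zariski closure of the complement of the range
of the induced map `k^n → k^m` has dimension at most `m - 2`. -/
def AlmostSurj {k : Type*} [CommSemiring k] {m n : ℕ}
    (f : Fin m → MvPolynomial (Fin n) k) : Prop :=
  ZClosureDimLE (polyRange f)ᶜ ((m : ℤ) - 2)

/-- `g` is determined by `f`. -/
def Determined {k : Type*} [CommSemiring k] {m n : ℕ}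
    (f : Fin m → MvPolynomial (Fin n) k) (g : MvPolynomial (Fin n) k) : Prop :=
  ∀ a b : Fin n → k, (∀ i, eval a (f i) = eval b (f i)) → eval a g = eval b g

open TensorProduct

theorem Algebra.mem_range_algebraMap_of_tmul_one_eq_one_tmul {R A : Type*} [CommRing R]
    [CommRing A] [Algebra R A] [Module.FaithfullyFlat R A] {u : A}
    (hu : u ⊗ₜ[R] (1 : A) = 1 ⊗ₜ[R] u) : u ∈ (algebraMap R A).range := by
  -- Apply `id ⊗ π` with `π : A → A ⧸ R`: the left side dies since `π 1 = 0`.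
  let π := (LinearMap.range (Algebra.linearMap R A)).mkQ
  have h := congrArg (LinearMap.lTensor A π) hu
  have hπ1 : π 1 = 0 := (Submodule.Quotient.mk_eq_zero _).mpr ⟨1, by simp⟩
  rw [LinearMap.lTensor_tmul, LinearMap.lTensor_tmul, hπ1, tmul_zero, eq_comm,
    Module.FaithfullyFlat.one_tmul_eq_zero_iff, Submodule.mkQ_apply,
    Submodule.Quotient.mk_eq_zero] at h
  exact h

theorem Ideal.pow_char_pow_sub_mem_of_sub_pow_mem {R : Type*} [CommRing R] (p : ℕ) [CharP R p]
    [Fact p.Prime] {I : Ideal R} {a b : R} {N : ℕ} (h : (a - b) ^ N ∈ I) :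
    a ^ p ^ N - b ^ p ^ N ∈ I := by
  rw [← sub_pow_char_pow]
  exact I.pow_mem_of_pow_mem h (Nat.lt_pow_self (Fact.out : p.Prime).one_lt).le

theorem exists_isRelPrime_mul_eq_of_mul_eq {A B F : Type*} [CommRing A] [IsDomain A]
    [UniqueFactorizationMonoid A] [CommRing B] [IsDomain B] [FunLike F A B] [RingHomClass F A B]
    {φ : F} (hφ : Function.Injective φ) {u : B} {P Q : A} (hQ : Q ≠ 0) (h : u * φ Q = φ P) :
    ∃ P' Q' : A, Q' ≠ 0 ∧ IsRelPrime Q' P' ∧ u * φ Q' = φ P' := by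
  obtain ⟨Q', P', c, hrel, rfl, rfl⟩ := UniqueFactorizationMonoid.exists_reduced_factors Q hQ P
  have hc : φ c ≠ 0 := (map_ne_zero_iff φ hφ).2 (left_ne_zero_of_mul hQ)
  refine ⟨P', Q', right_ne_zero_of_mul hQ, hrel, mul_left_cancel₀ hc ?_⟩
  rw [← map_mul, ← h, map_mul]
  ring

namespace MvPolynomial

variable {k σ τ : Type*}

theorem eval_aeval [CommSemiring k] (f : τ → MvPolynomial σ k) (a : σ → k)
    (p : MvPolynomial τ k) : eval a (aeval f p) = eval (fun i => eval a (f i)) p := by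
  simpa using comp_aeval_apply f (aeval a) p

theorem aeval_injective_of_surjective_eval [CommRing k] [IsDomain k] [Infinite k]
    {f : τ → MvPolynomial σ k}
    (hf : Function.Surjective fun a : σ → k => fun i => eval a (f i)) :
    Function.Injective (aeval f : MvPolynomial τ k →ₐ[k] MvPolynomial σ k) := by
  intro p q hpq
  refine MvPolynomial.funext fun b => ?_
  obtain ⟨a, rfl⟩ := hf b
  rw [← eval_aeval, ← eval_aeval, hpq]

/-- `p(x) - p(y)`, with `x` and `y` two copies of the variables. -/
noncomputable def inlSubInr [CommRing k] (p : MvPolynomial σ k) : MvPolynomial (σ ⊕ σ) k :=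
  rename Sum.inl p - rename Sum.inr p

/-- Its zero locus is the fibre product `{(x, y) | f x = f y}` of the polynomial map `f`. -/
noncomputable def kernelPairIdeal [CommRing k] (f : τ → MvPolynomial σ k) :
    Ideal (MvPolynomial (σ ⊕ σ) k) :=
  Ideal.span (Set.range fun i => inlSubInr (f i))

theorem exists_pow_mem_kernelPairIdeal [Field k] [IsAlgClosed k] [Finite σ]
    (f : τ → MvPolynomial σ k) {g : MvPolynomial σ k}
    (hg : ∀ a b : σ → k, (∀ i, eval a (f i) = eval b (f i)) → eval a g = eval b g) :
    ∃ N, inlSubInr g ^ N ∈ kernelPairIdeal f := by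
  rw [← Ideal.mem_radical_iff, ← vanishingIdeal_zeroLocus_eq_radical (K := k)]
  intro x hx
  have hf (i : τ) : eval (x ∘ Sum.inl) (f i) = eval (x ∘ Sum.inr) (f i) := by
    simpa [inlSubInr, aeval_eq_eval, sub_eq_zero, eval_rename] using
      hx _ (Ideal.subset_span ⟨i, rfl⟩)
  simpa [inlSubInr, aeval_eq_eval, sub_eq_zero, eval_rename] using hg _ _ hf

theorem tmul_one_eq_one_tmul_of_mem_kernelPairIdeal [CommRing k] {K L : Type*} [CommRing K]
    [CommRing L] [Algebra K L] (f : τ → MvPolynomial σ k) (ι : MvPolynomial σ k →+* L)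
    (hι : ∀ p : MvPolynomial τ k, ι (aeval f p) ∈ (algebraMap K L).range)
    {u : MvPolynomial σ k} (hu : inlSubInr u ∈ kernelPairIdeal f) :
    ι u ⊗ₜ[K] (1 : L) = 1 ⊗ₜ[K] ι u := by
  let ι₁ := (Algebra.TensorProduct.includeLeftRingHom : L →+* L ⊗[K] L).comp ι
  let ι₂ := (Algebra.TensorProduct.includeRight : L →ₐ[K] L ⊗[K] L).toRingHom.comp ι
  have hagree (p : MvPolynomial τ k) : ι₁ (aeval f p) = ι₂ (aeval f p) := by
    obtain ⟨w, hw⟩ := hι p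
    simp only [ι₁, ι₂, RingHom.comp_apply, ← hw]
    exact Algebra.TensorProduct.tmul_one_eq_one_tmul w
  let Ψ := eval₂Hom (ι₁.comp C) (Sum.elim (ι₁ ∘ X) (ι₂ ∘ X))
  have hΨ₁ : Ψ.comp (rename Sum.inl).toRingHom = ι₁ := by
    ext <;> simp [Ψ]
  have hΨ₂ : Ψ.comp (rename Sum.inr).toRingHom = ι₂ := by
    ext a
    · simpa [Ψ] using hagree (C a)
    · simp [Ψ]
  have hΨ (p : MvPolynomial σ k) : Ψ (inlSubInr p) = ι₁ p - ι₂ p := by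
    rw [inlSubInr, map_sub, ← RingHom.congr_fun hΨ₁ p, ← RingHom.congr_fun hΨ₂ p]
    rfl
  have hker : kernelPairIdeal f ≤ RingHom.ker Ψ := by
    rw [kernelPairIdeal, Ideal.span_le]
    rintro _ ⟨i, rfl⟩
    simpa [hΨ, sub_eq_zero] using hagree (X i)
  simpa [hΨ, sub_eq_zero, ι₁, ι₂] using hker hu

theorem exists_mul_aeval_eq_aeval_of_mem_kernelPairIdeal [Field k] (f : τ → MvPolynomial σ k)
    (hf : Function.Injective (aeval f : MvPolynomial τ k →ₐ[k] MvPolynomial σ k))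
    {u : MvPolynomial σ k} (hu : inlSubInr u ∈ kernelPairIdeal f) :
    ∃ P Q : MvPolynomial τ k, Q ≠ 0 ∧ u * aeval f Q = aeval f P := by
  let K := FractionRing (MvPolynomial τ k)
  let L := FractionRing (MvPolynomial σ k)
  let ι := algebraMap (MvPolynomial σ k) L
  have hι : Function.Injective ι := IsFractionRing.injective _ L
  have hιf : Function.Injective (ι.comp (aeval f).toRingHom) := hι.comp hf
  -- `K` embeds into `L` by `P / Q ↦ P(f) / Q(f)`.
  let _ : Algebra K L := (IsFractionRing.lift hιf).toAlgebra
  have : Module.Free K L := Module.Free.of_divisionRing K L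
  have : Module.FaithfullyFlat K L := Module.FaithfullyFlat.instOfNontrivialOfFree K L
  have hK (p : MvPolynomial τ k) : algebraMap K L (algebraMap _ K p) = ι (aeval f p) :=
    IsFractionRing.lift_algebraMap hιf p
  obtain ⟨w, hw⟩ := Algebra.mem_range_algebraMap_of_tmul_one_eq_one_tmul
    (tmul_one_eq_one_tmul_of_mem_kernelPairIdeal (K := K) f ι (fun p => ⟨_, hK p⟩) hu)
  obtain ⟨P, Q, hQ, rfl⟩ := IsFractionRing.div_surjective (A := MvPolynomial τ k) w
  have hQ0 : Q ≠ 0 := nonZeroDivisors.ne_zero hQ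
  refine ⟨P, Q, hQ0, hι ?_⟩
  have hQι : ι (aeval f Q) ≠ 0 := (map_ne_zero_iff _ hιf).2 hQ0
  rw [map_div₀, hK, hK, div_eq_iff hQι] at hw
  rw [map_mul, hw]

theorem isUnit_of_isRelPrime_of_forall_eval_eq_zero [Field k] [IsAlgClosed k] [Finite σ]
    {P Q : MvPolynomial σ k} (hQ : Q ≠ 0) (hPQ : IsRelPrime Q P)
    (hzero : ∀ x, eval x Q = 0 → eval x P = 0) : IsUnit Q := by
  by_contra hQu
  obtain ⟨r, hr, hrQ⟩ := WfDvdMonoid.exists_irreducible_factor hQu hQ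
  have hP : P ∈ vanishingIdeal k (zeroLocus k (Ideal.span {r})) := by
    intro x hx
    obtain ⟨s, rfl⟩ := hrQ
    rw [aeval_eq_eval]
    exact hzero x (by rw [map_mul, ← aeval_eq_eval, hx r (Ideal.subset_span rfl), zero_mul])
  have hprime := UniqueFactorizationMonoid.irreducible_iff_prime.mp hr
  rw [vanishingIdeal_zeroLocus_eq_radical,
    ((Ideal.span_singleton_prime hprime.ne_zero).mpr hprime).radical,
    Ideal.mem_span_singleton] at hP
  exact hr.not_isUnit (hPQ hrQ hP)

theorem exists_eval_eq_of_mul_eval_eq [Field k] [IsAlgClosed k] [Finite σ] {H : (σ → k) → k}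
    {P Q : MvPolynomial σ k} (hQ : Q ≠ 0) (hPQ : IsRelPrime Q P)
    (h : ∀ x, H x * eval x Q = eval x P) : ∃ p : MvPolynomial σ k, ∀ x, H x = eval x p := by
  obtain ⟨v, rfl⟩ := isUnit_of_isRelPrime_of_forall_eval_eq_zero hQ hPQ
    fun x hx => by rw [← h x, hx, mul_zero]
  refine ⟨↑v⁻¹ * P, fun x => ?_⟩
  rw [map_mul, ← h x, mul_left_comm, ← map_mul, Units.inv_mul, map_one, mul_one]

end MvPolynomial

theorem stmt18 {k : Type*} [Field k] [IsAlgClosed k] (χ : ℕ) [CharP k χ] (hχ : 0 < χ)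
    {m n : ℕ} (f : Fin m → MvPolynomial (Fin n) k)
    (hsurj : Function.Surjective fun a : Fin n → k => fun i => eval a (f i))
    (h : (Fin m → k) → k) (g : MvPolynomial (Fin n) k)
    (hcomp : ∀ a : Fin n → k, h (fun i => eval a (f i)) = eval a g) :
    ∃ ν : ℕ, ∃ p : MvPolynomial (Fin m) k, ∀ b : Fin m → k, h b ^ χ ^ ν = eval b p := by
  have : Fact χ.Prime := ⟨(CharP.char_is_prime_or_zero k χ).resolve_right hχ.ne'⟩
  have hinj := aeval_injective_of_surjective_eval hsurj
  obtain ⟨N, hN⟩ := exists_pow_mem_kernelPairIdeal f (g := g) fun a b hab => by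
    rw [← hcomp, ← hcomp, funext hab]
  have hfrob : inlSubInr (g ^ χ ^ N) ∈ kernelPairIdeal f := by
    simpa only [inlSubInr, map_pow] using Ideal.pow_char_pow_sub_mem_of_sub_pow_mem χ hN
  obtain ⟨P₀, Q₀, hQ₀, hPQ₀⟩ :=
    exists_mul_aeval_eq_aeval_of_mem_kernelPairIdeal f hinj hfrob
  obtain ⟨P, Q, hQ, hrel, hPQ⟩ := exists_isRelPrime_mul_eq_of_mul_eq hinj hQ₀ hPQ₀
  refine ⟨N, exists_eval_eq_of_mul_eval_eq hQ hrel fun b => ?_⟩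
  obtain ⟨a, rfl⟩ := hsurj b
  simpa only [map_mul, map_pow, eval_aeval, hcomp] using congrArg (eval a) hPQ
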